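/- arXiv:1311.0914 — 3 statements merged into one kernel-verified Lean document; each statement's English description precedes it below -/
import Mathlib

section
/- For the quadratic f(α) = (1/2)αᵀQα − eᵀα on the box [0,C]ⁿ with Q symmetric, if α* is a minimizer and ᾱ is the concatenation of block-subproblem minimizers (equivalently, a minimizer of f̄ as in the block-diagonal approximation Q̄), then 0 ≤ f(ᾱ) − f(α*) ≤ (1/2)C²·D(π), where D(π) = Σ_{i,j : π(i) ≠ π(j)} |Q_{ij}|. -/
open Matrix BigOperators

/-!
Write `f = f̄ + ½ qᴱ` with `E = Q - Q̄` the between-cluster part of `Q` and `qᴱ(α) = αᵀEα`.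
Since `ᾱ` minimizes `f̄` on the box, `f(ᾱ) - f(α*) ≤ ½ (qᴱ(ᾱ) - qᴱ(α*))`, and each term
`(ᾱᵢᾱⱼ - α*ᵢα*ⱼ) Eᵢⱼ` of this difference is at most `C² |Eᵢⱼ|` because both products of box
coordinates lie in `[0, C²]`.
-/

lemma abs_mul_sub_mul_le_sq {a b c d C : ℝ} (ha : 0 ≤ a ∧ a ≤ C) (hb : 0 ≤ b ∧ b ≤ C)
    (hc : 0 ≤ c ∧ c ≤ C) (hd : 0 ≤ d ∧ d ≤ C) : |a * b - c * d| ≤ C ^ 2 := by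
  obtain ⟨ha₀, ha₁⟩ := ha
  obtain ⟨hb₀, hb₁⟩ := hb
  obtain ⟨hc₀, hc₁⟩ := hc
  obtain ⟨hd₀, hd₁⟩ := hd
  rw [abs_le]
  constructor <;> nlinarith [mul_nonneg ha₀ hb₀, mul_nonneg hc₀ hd₀]

section QuadraticForm

variable {ι : Type*} [Fintype ι]

lemma dotProduct_mulVec_self_eq_sum (E : Matrix ι ι ℝ) (x : ι → ℝ) :
    x ⬝ᵥ E *ᵥ x = ∑ i, ∑ j, x i * E i j * x j := by
  simp only [dotProduct, mulVec, Finset.mul_sum, mul_assoc]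

lemma dotProduct_mulVec_self_sub_le {E : Matrix ι ι ℝ} {C : ℝ} {x y : ι → ℝ}
    (hx : ∀ i, 0 ≤ x i ∧ x i ≤ C) (hy : ∀ i, 0 ≤ y i ∧ y i ≤ C) :
    x ⬝ᵥ E *ᵥ x - y ⬝ᵥ E *ᵥ y ≤ C ^ 2 * ∑ i, ∑ j, |E i j| := by
  simp only [dotProduct_mulVec_self_eq_sum, Finset.mul_sum, ← Finset.sum_sub_distrib]
  refine Finset.sum_le_sum fun i _ => Finset.sum_le_sum fun j _ => ?_
  calc x i * E i j * x j - y i * E i j * y j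
      = (x i * x j - y i * y j) * E i j := by ring
    _ ≤ |x i * x j - y i * y j| * |E i j| := (le_abs_self _).trans (abs_mul _ _).le
    _ ≤ C ^ 2 * |E i j| :=
        mul_le_mul_of_nonneg_right
          (abs_mul_sub_mul_le_sq (hx i) (hx j) (hy i) (hy j)) (abs_nonneg _)

end QuadraticForm

theorem stmt1_general (n k : ℕ) (Q : Matrix (Fin n) (Fin n) ℝ)
    (C : ℝ) (π : Fin n → Fin k)
    (Qbar : Matrix (Fin n) (Fin n) ℝ)
    (hQbar : ∀ i j, Qbar i j = if π i = π j then Q i j else 0)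
    (box : Set (Fin n → ℝ))
    (hbox : box = {α | ∀ i, 0 ≤ α i ∧ α i ≤ C})
    (f fbar : (Fin n → ℝ) → ℝ)
    (hf : ∀ α, f α = (1/2) * (α ⬝ᵥ Q.mulVec α) - ∑ i, α i)
    (hfbar : ∀ α, fbar α = (1/2) * (α ⬝ᵥ Qbar.mulVec α) - ∑ i, α i)
    (D : ℝ)
    (hD : D = ∑ i, ∑ j, (if π i ≠ π j then |Q i j| else 0))
    (αstar : Fin n → ℝ) (hαstar : αstar ∈ box)
    (hmin : ∀ β ∈ box, f αstar ≤ f β)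
    (αbar : Fin n → ℝ) (hαbar : αbar ∈ box)
    (hminbar : ∀ β ∈ box, fbar αbar ≤ fbar β) :
    0 ≤ f αbar - f αstar ∧ f αbar - f αstar ≤ (1/2) * C^2 * D := by
  refine ⟨sub_nonneg.2 (hmin αbar hαbar), ?_⟩
  have hsplit : ∀ α, f α = fbar α + (1/2) * (α ⬝ᵥ (Q - Qbar) *ᵥ α) := by
    intro α
    rw [hf, hfbar, sub_mulVec, dotProduct_sub]
    ring
  have hoff : ∑ i, ∑ j, |(Q - Qbar) i j| = D := by
    rw [hD]
    refine Finset.sum_congr rfl fun i _ => Finset.sum_congr rfl fun j _ => ?_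
    by_cases h : π i = π j <;> simp [hQbar, h]
  subst hbox
  have hquad := dotProduct_mulVec_self_sub_le (E := Q - Qbar) hαbar hαstar
  rw [hoff] at hquad
  have hbar := hminbar αstar hαstar
  rw [hsplit αbar, hsplit αstar]
  linarith

/-- if α* minimizes f over the box and ᾱ minimizes the block-diagonal
objective f̄ over the box, then 0 ≤ f(ᾱ) − f(α*) ≤ (1/2)·C²·D(π). -/
theorem stmt1 (n k : ℕ) (Q : Matrix (Fin n) (Fin n) ℝ) (hQ : Q.IsSymm)
    (C : ℝ) (hC : 0 < C) (π : Fin n → Fin k)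
    (Qbar : Matrix (Fin n) (Fin n) ℝ)
    (hQbar : ∀ i j, Qbar i j = if π i = π j then Q i j else 0)
    (box : Set (Fin n → ℝ))
    (hbox : box = {α | ∀ i, 0 ≤ α i ∧ α i ≤ C})
    (f fbar : (Fin n → ℝ) → ℝ)
    (hf : ∀ α, f α = (1/2) * (α ⬝ᵥ Q.mulVec α) - ∑ i, α i)
    (hfbar : ∀ α, fbar α = (1/2) * (α ⬝ᵥ Qbar.mulVec α) - ∑ i, α i)
    (D : ℝ)
    (hD : D = ∑ i, ∑ j, (if π i ≠ π j then |Q i j| else 0))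
    (αstar : Fin n → ℝ) (hαstar : αstar ∈ box)
    (hmin : ∀ β ∈ box, f αstar ≤ f β)
    (αbar : Fin n → ℝ) (hαbar : αbar ∈ box)
    (hminbar : ∀ β ∈ box, fbar αbar ≤ fbar β) :
    0 ≤ f αbar - f αstar ∧ f αbar - f αstar ≤ (1/2) * C^2 * D :=
  stmt1_general n k Q C π Qbar hQbar box hbox f fbar hf hfbar D hD αstar hαstar hmin αbar hαbar
    hminbar
end

section
/- With Q symmetric positive definite (smallest eigenvalue σ_n > 0), Q̄ the block-diagonal part of Q w.r.t. a partition π, α* the minimizer of f(α) = (1/2)αᵀQα − eᵀα over [0,C]ⁿ, and ᾱ the minimizer of the block-diagonal problem, D(π) = Σ_{π(i)≠π(j)} |Q_{ij}| and K_max = max_i Q_{ii}: for any index i with ᾱ_i = 0 and (Q̄ᾱ)_i − 1 > C·D(π)·(1 + √n·K_max/√(σ_n·D(π))), it follows that α*_i = 0. -/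
/-!
Put d = ᾱ - α*. Adding the first-order conditions of the two box-constrained problems,
(Qα* - e)ᵀd ≥ 0 and (Q̄ᾱ - e)ᵀ(-d) ≥ 0, and using Qα* = Qᾱ - Qd gives
σ‖d‖₂² ≤ dᵀQd ≤ dᵀ(Q - Q̄)ᾱ ≤ C²·D(π), so ‖d‖₁ ≤ √n·C·√(D(π)/σ). Positive semidefiniteness
gives |Q_ij| ≤ (Q_ii + Q_jj)/2 ≤ K_max, hence
(Qα*)_i = (Q̄ᾱ)_i + ((Q - Q̄)ᾱ)_i - (Qd)_i ≥ (Q̄ᾱ)_i - C·D(π) - K_max·‖d‖₁ > 1,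
and lowering α*_i to 0 would then decrease f unless α*_i = 0 already.
-/

open Matrix

namespace SVMDual

section
variable {ι : Type*} [Fintype ι]

lemma add_smul_dotProduct_mulVec_add_smul {A : Matrix ι ι ℝ} (hA : A.IsSymm) (x y : ι → ℝ)
    (t : ℝ) :
    (x + t • y) ⬝ᵥ A *ᵥ (x + t • y) =
      x ⬝ᵥ A *ᵥ x + 2 * t * (y ⬝ᵥ A *ᵥ x) + t ^ 2 * (y ⬝ᵥ A *ᵥ y) := by
  have hxy : x ⬝ᵥ A *ᵥ y = y ⬝ᵥ A *ᵥ x := by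
    rw [dotProduct_mulVec, ← mulVec_transpose, hA, dotProduct_comm]
  simp only [mulVec_add, mulVec_smul, add_dotProduct, dotProduct_add, smul_dotProduct,
    dotProduct_smul, smul_eq_mul, hxy]
  ring

lemma abs_apply_le_of_forall_dotProduct_mulVec_nonneg [DecidableEq ι] {A : Matrix ι ι ℝ}
    (hA : A.IsSymm) (hpsd : ∀ x, 0 ≤ x ⬝ᵥ A *ᵥ x) (i j : ι) : |A i j| ≤ (A i i + A j j) / 2 := by
  have key (t : ℝ) : 0 ≤ A i i + 2 * t * A i j + t ^ 2 * A j j := by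
    have h := hpsd (Pi.single i 1 + t • Pi.single j 1)
    rw [add_smul_dotProduct_mulVec_add_smul hA] at h
    simpa [single_dotProduct, hA.apply] using h
  rw [abs_le]
  constructor <;> nlinarith [key 1, key (-1)]

lemma abs_apply_le_of_isGreatest_diag [DecidableEq ι] {A : Matrix ι ι ℝ} (hA : A.IsSymm)
    (hpsd : ∀ x, 0 ≤ x ⬝ᵥ A *ᵥ x) {K : ℝ} (hK : IsGreatest (Set.range fun i => A i i) K)
    (i j : ι) : |A i j| ≤ K := by
  linarith [abs_apply_le_of_forall_dotProduct_mulVec_nonneg hA hpsd i j, hK.2 ⟨i, rfl⟩,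
    hK.2 ⟨j, rfl⟩]

noncomputable def dualObjective (A : Matrix ι ι ℝ) (α : ι → ℝ) : ℝ :=
  (1 / 2) * (α ⬝ᵥ A *ᵥ α) - ∑ i, α i

lemma dualObjective_add_smul {A : Matrix ι ι ℝ} (hA : A.IsSymm) (α d : ι → ℝ) (t : ℝ) :
    dualObjective A (α + t • d) =
      dualObjective A α + t * (d ⬝ᵥ (A *ᵥ α - 1)) + t ^ 2 / 2 * (d ⬝ᵥ A *ᵥ d) := by
  simp only [dualObjective, add_smul_dotProduct_mulVec_add_smul hA, dotProduct_sub,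
    dotProduct_one, Pi.add_apply, Pi.smul_apply, smul_eq_mul, Finset.sum_add_distrib,
    ← Finset.mul_sum]
  ring

lemma nonneg_of_forall_mul_add_mul_sq_nonneg {a b : ℝ}
    (h : ∀ t ∈ Set.Ioc (0 : ℝ) 1, 0 ≤ a * t + b * t ^ 2) : 0 ≤ a := by
  by_contra! ha
  set t := min 1 (-a / (|b| + 1))
  have ht : t ∈ Set.Ioc (0 : ℝ) 1 :=
    ⟨lt_min one_pos (div_pos (neg_pos.2 ha) (by positivity)), min_le_left _ _⟩
  have hta : t * (|b| + 1) ≤ -a := (le_div_iff₀ (by positivity)).1 (min_le_right _ _)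
  nlinarith [h t ht, mul_le_mul_of_nonneg_right (le_abs_self b) (sq_nonneg t),
    mul_le_mul_of_nonneg_left hta ht.1.le, mul_pos ht.1 ht.1]

theorem dotProduct_sub_mulVec_sub_one_nonneg_of_isMinOn {A : Matrix ι ι ℝ} (hA : A.IsSymm)
    {s : Set (ι → ℝ)} (hs : Convex ℝ s) {α β : ι → ℝ} (hmin : IsMinOn (dualObjective A) s α)
    (hα : α ∈ s) (hβ : β ∈ s) : 0 ≤ (β - α) ⬝ᵥ (A *ᵥ α - 1) := by
  refine nonneg_of_forall_mul_add_mul_sq_nonneg (b := (β - α) ⬝ᵥ A *ᵥ (β - α) / 2)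
    fun t ht => ?_
  have := isMinOn_iff.1 hmin _ (hs.add_smul_sub_mem hα hβ ⟨ht.1.le, ht.2⟩)
  rw [dualObjective_add_smul hA] at this
  linarith

theorem sum_sq_sub_le_of_isMinOn {A B : Matrix ι ι ℝ} (hA : A.IsSymm) (hB : B.IsSymm) {σ : ℝ}
    (hσ : ∀ x, σ * ∑ i, x i ^ 2 ≤ x ⬝ᵥ A *ᵥ x) {s : Set (ι → ℝ)} (hs : Convex ℝ s)
    {α β : ι → ℝ} (hα : α ∈ s) (hαmin : IsMinOn (dualObjective A) s α)
    (hβ : β ∈ s) (hβmin : IsMinOn (dualObjective B) s β) :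
    σ * ∑ i, (β - α) i ^ 2 ≤ (β - α) ⬝ᵥ (A - B) *ᵥ β := by
  have hαβ := dotProduct_sub_mulVec_sub_one_nonneg_of_isMinOn hA hs hαmin hα hβ
  have hβα := dotProduct_sub_mulVec_sub_one_nonneg_of_isMinOn hB hs hβmin hβ hα
  have key : (β - α) ⬝ᵥ (A - B) *ᵥ β = (β - α) ⬝ᵥ A *ᵥ (β - α) +
      (β - α) ⬝ᵥ (A *ᵥ α - 1) + (α - β) ⬝ᵥ (B *ᵥ β - 1) := by
    simp only [sub_mulVec, mulVec_sub, dotProduct_sub, sub_dotProduct]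
    ring
  linarith [hσ (β - α)]

theorem eq_zero_of_one_lt_mulVec_apply_of_isMinOn [DecidableEq ι] {A : Matrix ι ι ℝ}
    (hA : A.IsSymm) {C : ℝ} {α : ι → ℝ}
    (hmin : IsMinOn (dualObjective A) (Set.univ.pi fun _ => Set.Icc 0 C) α)
    (hα : α ∈ Set.univ.pi fun _ => Set.Icc 0 C) {i : ι} (hi : 1 < (A *ᵥ α) i) : α i = 0 := by
  have hαi := Set.mem_univ_pi.1 hα i
  have hupd : Function.update α i 0 ∈ Set.univ.pi fun _ => Set.Icc 0 C :=
    (Set.update_mem_pi_iff_of_mem hα).2 fun _ => ⟨le_rfl, hαi.1.trans hαi.2⟩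
  have hsub : Function.update α i 0 - α = Pi.single i (-α i) := by
    ext j
    rcases eq_or_ne j i with rfl | hj <;> simp [*]
  have h := dotProduct_sub_mulVec_sub_one_nonneg_of_isMinOn hA
    (convex_pi fun _ _ => convex_Icc 0 C) hmin hα hupd
  rw [hsub, single_dotProduct, Pi.sub_apply, Pi.one_apply] at h
  nlinarith [hαi.1]

end

section
variable {ι κ α : Type*} [DecidableEq κ]

def blockDiagPart [Zero α] (π : ι → κ) (A : Matrix ι ι α) : Matrix ι ι α :=
  Matrix.of fun i j => if π i = π j then A i j else 0

lemma isSymm_blockDiagPart [Zero α] {A : Matrix ι ι α} (hA : A.IsSymm) (π : ι → κ) :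
    (blockDiagPart π A).IsSymm := by
  ext i j
  simp only [SVMDual.blockDiagPart, transpose_apply, of_apply, eq_comm, hA.apply]

lemma abs_sub_blockDiagPart_apply (π : ι → κ) (A : Matrix ι ι ℝ) (i j : ι) :
    |(A - blockDiagPart π A) i j| = if π i ≠ π j then |A i j| else 0 := by
  by_cases h : π i = π j <;> simp [blockDiagPart, h]

end

section
variable {m n : Type*} [Fintype n]

lemma abs_mulVec_apply_le_sum (E : Matrix m n ℝ) (v : n → ℝ) (i : m) :
    |(E *ᵥ v) i| ≤ ∑ j, |E i j| * |v j| :=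
  (Finset.abs_sum_le_sum_abs (fun j => E i j * v j) Finset.univ).trans_eq (by simp [abs_mul])

lemma abs_mulVec_apply_le_of_abs_le (E : Matrix m n ℝ) {v : n → ℝ} {c : ℝ}
    (hv : ∀ j, |v j| ≤ c) (i : m) : |(E *ᵥ v) i| ≤ c * ∑ j, |E i j| := by
  refine (abs_mulVec_apply_le_sum E v i).trans ?_
  rw [Finset.mul_sum]
  exact Finset.sum_le_sum fun j _ => (mul_comm _ _).trans_le
    (mul_le_mul_of_nonneg_right (hv j) (abs_nonneg _))

lemma abs_mulVec_apply_le_mul_sum_sum_abs [Fintype m] (E : Matrix m n ℝ) {v : n → ℝ} {c : ℝ}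
    (hc : 0 ≤ c) (hv : ∀ j, |v j| ≤ c) (i : m) : |(E *ᵥ v) i| ≤ c * ∑ i, ∑ j, |E i j| :=
  (abs_mulVec_apply_le_of_abs_le E hv i).trans <| mul_le_mul_of_nonneg_left
    (Finset.single_le_sum (f := fun l => ∑ j, |E l j|) (fun _ _ => by positivity)
      (Finset.mem_univ i)) hc

lemma abs_mulVec_apply_le_of_abs_apply_le {E : Matrix m n ℝ} (v : n → ℝ) {i : m} {K : ℝ}
    (hE : ∀ j, |E i j| ≤ K) : |(E *ᵥ v) i| ≤ K * ∑ j, |v j| := by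
  refine (abs_mulVec_apply_le_sum E v i).trans ?_
  rw [Finset.mul_sum]
  exact Finset.sum_le_sum fun j _ => mul_le_mul_of_nonneg_right (hE j) (abs_nonneg _)

lemma dotProduct_mulVec_le [Fintype m] (E : Matrix m n ℝ) {u : m → ℝ} {v : n → ℝ} {a b : ℝ}
    (hu : ∀ i, |u i| ≤ a) (hv : ∀ j, |v j| ≤ b) :
    u ⬝ᵥ E *ᵥ v ≤ a * b * ∑ i, ∑ j, |E i j| := by
  rw [dotProduct, Finset.mul_sum]
  refine Finset.sum_le_sum fun i _ => ?_
  calc u i * (E *ᵥ v) i ≤ |u i| * |(E *ᵥ v) i| := (le_abs_self _).trans_eq (abs_mul _ _)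
    _ ≤ a * (b * ∑ j, |E i j|) :=
      mul_le_mul (hu i) (abs_mulVec_apply_le_of_abs_le E hv i) (abs_nonneg _)
        ((abs_nonneg _).trans (hu i))
    _ = a * b * ∑ j, |E i j| := (mul_assoc _ _ _).symm

end

lemma sum_abs_le_sqrt_card_mul_sqrt_sum_sq {ι : Type*} [Fintype ι] (x : ι → ℝ) :
    ∑ i, |x i| ≤ √(Fintype.card ι) * √(∑ i, x i ^ 2) := by
  rw [← Real.sqrt_mul (by positivity)]
  apply Real.le_sqrt_of_sq_le
  simpa using sq_sum_le_card_mul_sum_sq (s := Finset.univ) (f := fun i => |x i|)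

lemma div_sqrt_mul_eq_sqrt_div {x : ℝ} (hx : 0 ≤ x) {y : ℝ} (hy : 0 ≤ y) :
    x / √(y * x) = √(x / y) := by
  rw [Real.sqrt_mul hy, Real.sqrt_div hx, div_mul_eq_div_div_swap, Real.div_sqrt]

lemma abs_apply_le_of_mem_pi_Icc {ι : Type*} {α : ι → ℝ} {C : ℝ}
    (hα : α ∈ Set.univ.pi fun _ => Set.Icc 0 C) (i : ι) : |α i| ≤ C := by
  obtain ⟨h0, hC⟩ := Set.mem_univ_pi.1 hα i
  exact abs_le.2 ⟨by linarith, hC⟩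

theorem sum_abs_sub_le_of_isMinOn {ι : Type*} [Fintype ι] {A B : Matrix ι ι ℝ} (hA : A.IsSymm)
    (hB : B.IsSymm) {σ : ℝ} (hσ0 : 0 < σ) (hσ : ∀ x, σ * ∑ i, x i ^ 2 ≤ x ⬝ᵥ A *ᵥ x)
    {C : ℝ} (hC : 0 ≤ C) {α β : ι → ℝ} (hα : α ∈ Set.univ.pi fun _ => Set.Icc 0 C)
    (hαmin : IsMinOn (dualObjective A) (Set.univ.pi fun _ => Set.Icc 0 C) α)
    (hβ : β ∈ Set.univ.pi fun _ => Set.Icc 0 C)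
    (hβmin : IsMinOn (dualObjective B) (Set.univ.pi fun _ => Set.Icc 0 C) β) :
    ∑ i, |(β - α) i| ≤ √(Fintype.card ι) * (C * √((∑ i, ∑ j, |(A - B) i j|) / σ)) := by
  have hα' := Set.mem_univ_pi.1 hα
  have hβ' := Set.mem_univ_pi.1 hβ
  have hdiff (i : ι) : |(β - α) i| ≤ C := by
    obtain ⟨hα0, hαC⟩ := hα' i
    obtain ⟨hβ0, hβC⟩ := hβ' i
    exact abs_sub_le_iff.2 ⟨by linarith, by linarith⟩
  have hsq : σ * ∑ i, (β - α) i ^ 2 ≤ C ^ 2 * ∑ i, ∑ j, |(A - B) i j| :=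
    (sum_sq_sub_le_of_isMinOn hA hB hσ (convex_pi fun _ _ => convex_Icc 0 C) hα hαmin hβ
      hβmin).trans (by
        simpa only [sq] using dotProduct_mulVec_le (A - B) hdiff (abs_apply_le_of_mem_pi_Icc hβ))
  refine (sum_abs_le_sqrt_card_mul_sqrt_sum_sq _).trans
    (mul_le_mul_of_nonneg_left ?_ (Real.sqrt_nonneg _))
  rw [← Real.sqrt_sq hC, ← Real.sqrt_mul (sq_nonneg C), mul_div_assoc']
  exact Real.sqrt_le_sqrt ((le_div_iff₀' hσ0).2 hsq)

end SVMDual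

open SVMDual

theorem stmt5_general (n k : ℕ)
    (Q : Matrix (Fin n) (Fin n) ℝ) (hQ : Q.IsSymm)
    (σ : ℝ) (hσ : 0 < σ)
    (heig : ∀ x : Fin n → ℝ, σ * (∑ i, (x i)^2) ≤ x ⬝ᵥ Q.mulVec x)
    (C : ℝ) (π : Fin n → Fin k)
    (Qbar : Matrix (Fin n) (Fin n) ℝ)
    (hQbar : ∀ i j, Qbar i j = if π i = π j then Q i j else 0)
    (box : Set (Fin n → ℝ))
    (hbox : box = {α | ∀ i, 0 ≤ α i ∧ α i ≤ C})
    (f fbar : (Fin n → ℝ) → ℝ)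
    (hf : ∀ α, f α = (1/2) * (α ⬝ᵥ Q.mulVec α) - ∑ i, α i)
    (hfbar : ∀ α, fbar α = (1/2) * (α ⬝ᵥ Qbar.mulVec α) - ∑ i, α i)
    (D : ℝ)
    (hD : D = ∑ i, ∑ j, (if π i ≠ π j then |Q i j| else 0))
    (Kmax : ℝ) (hKmax : IsGreatest (Set.range fun i => Q i i) Kmax)
    (αstar : Fin n → ℝ) (hαstar : αstar ∈ box)
    (hmin : ∀ β ∈ box, f αstar ≤ f β)
    (αbar : Fin n → ℝ) (hαbar : αbar ∈ box)
    (hminbar : ∀ β ∈ box, fbar αbar ≤ fbar β) :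
    ∀ i : Fin n, αbar i = 0 →
      Qbar.mulVec αbar i - 1 >
        C * D * (1 + Real.sqrt n * Kmax / Real.sqrt (σ * D)) →
      αstar i = 0 := by
  intro i _ hgap
  obtain rfl : Qbar = blockDiagPart π Q := Matrix.ext hQbar
  obtain rfl : f = dualObjective Q := funext hf
  obtain rfl : fbar = dualObjective (blockDiagPart π Q) := funext hfbar
  obtain rfl : box = Set.univ.pi fun _ => Set.Icc 0 C :=
    hbox.trans (Set.ext fun _ => Set.mem_univ_pi.symm)
  have hD' : D = ∑ i, ∑ j, |(Q - blockDiagPart π Q) i j| := by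
    simp only [hD, abs_sub_blockDiagPart_apply]
  have hD0 : 0 ≤ D := hD' ▸ by positivity
  have hC : 0 ≤ C := (abs_nonneg _).trans (abs_apply_le_of_mem_pi_Icc hαstar i)
  have hQK := abs_apply_le_of_isGreatest_diag hQ
    (fun x => (by positivity : 0 ≤ σ * _).trans (heig x)) hKmax
  have hoff := abs_mulVec_apply_le_mul_sum_sum_abs (Q - blockDiagPart π Q) hC
    (abs_apply_le_of_mem_pi_Icc hαbar) i
  have hdist := sum_abs_sub_le_of_isMinOn hQ (isSymm_blockDiagPart hQ π) hσ heig hC hαstar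
    (isMinOn_iff.2 hmin) hαbar (isMinOn_iff.2 hminbar)
  simp only [← hD', Fintype.card_fin] at hdist hoff
  have hK := abs_mulVec_apply_le_of_abs_apply_le (αbar - αstar) (hQK i)
  have hsplit : (Q *ᵥ αstar) i = (blockDiagPart π Q *ᵥ αbar) i +
      ((Q - blockDiagPart π Q) *ᵥ αbar) i - (Q *ᵥ (αbar - αstar)) i := by
    simp only [sub_mulVec, mulVec_sub, Pi.sub_apply]
    ring
  have hthreshold : C * D * (√n * Kmax / √(σ * D)) = Kmax * (√n * (C * √(D / σ))) := by
    rw [← div_sqrt_mul_eq_sqrt_div hD0 hσ.le]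
    ring
  rw [mul_add, mul_one, hthreshold] at hgap
  refine eq_zero_of_one_lt_mulVec_apply_of_isMinOn hQ (isMinOn_iff.2 hmin) hαstar ?_
  linarith [abs_le.1 hoff, abs_le.1 hK,
    mul_le_mul_of_nonneg_left hdist ((abs_nonneg _).trans (hQK i i))]

/-- early identification of non-support vectors: if ᾱ_i = 0 and
(Q̄ᾱ)_i − 1 > C·D(π)·(1 + √n·K_max/√(σ·D(π))), then α*_i = 0. -/
theorem stmt5 (n k : ℕ) (hn : 0 < n)
    (Q : Matrix (Fin n) (Fin n) ℝ) (hQ : Q.IsSymm)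
    (σ : ℝ) (hσ : 0 < σ)
    (heig : ∀ x : Fin n → ℝ, σ * (∑ i, (x i)^2) ≤ x ⬝ᵥ Q.mulVec x)
    (C : ℝ) (hC : 0 < C) (π : Fin n → Fin k)
    (Qbar : Matrix (Fin n) (Fin n) ℝ)
    (hQbar : ∀ i j, Qbar i j = if π i = π j then Q i j else 0)
    (box : Set (Fin n → ℝ))
    (hbox : box = {α | ∀ i, 0 ≤ α i ∧ α i ≤ C})
    (f fbar : (Fin n → ℝ) → ℝ)
    (hf : ∀ α, f α = (1/2) * (α ⬝ᵥ Q.mulVec α) - ∑ i, α i)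
    (hfbar : ∀ α, fbar α = (1/2) * (α ⬝ᵥ Qbar.mulVec α) - ∑ i, α i)
    (D : ℝ)
    (hD : D = ∑ i, ∑ j, (if π i ≠ π j then |Q i j| else 0))
    (hDpos : 0 < D)
    (Kmax : ℝ) (hKmax : IsGreatest (Set.range fun i => Q i i) Kmax)
    (αstar : Fin n → ℝ) (hαstar : αstar ∈ box)
    (hmin : ∀ β ∈ box, f αstar ≤ f β)
    (αbar : Fin n → ℝ) (hαbar : αbar ∈ box)
    (hminbar : ∀ β ∈ box, fbar αbar ≤ fbar β) :
    ∀ i : Fin n, αbar i = 0 →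
      Qbar.mulVec αbar i - 1 >
        C * D * (1 + Real.sqrt n * Kmax / Real.sqrt (σ * D)) →
      αstar i = 0 :=
  stmt5_general n k Q hQ σ hσ heig C π Qbar hQbar box hbox f fbar hf hfbar D hD Kmax hKmax αstar
    hαstar hmin αbar hαbar hminbar
end

section
/- Under the same setting (Q symmetric, Q̄ its block-diagonal part w.r.t. partition π, α* the box-constrained minimizer of f, ᾱ the minimizer of the block-diagonal problem over [0,C]ⁿ), define S* = {i : α*_i > 0} and S̄ = {i : ᾱ_i > 0}. Then 0 ≤ f(ᾱ) − f(α*) ≤ (1/2)C²·D_{S*∪S̄}(π), where D_{S*∪S̄}(π) = Σ_{i,j ∈ S*∪S̄, π(i)≠π(j)} |Q_{ij}|. If moreover Q is positive definite with smallest eigenvalue σ_n > 0, then ‖α* − ᾱ‖₂² ≤ C²·D_{S*∪S̄}(π)/σ_n. -/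
open Matrix Set Filter Topology

/-! The lower bound is the optimality of `α*`. For the upper bound, `f − f̄` is the quadratic form of
the off-block part `Q − Q̄`, and `f̄(ᾱ) ≤ f̄(α*)` gives
`f(ᾱ) − f(α*) ≤ ½ (ᾱᵀ(Q − Q̄)ᾱ − α*ᵀ(Q − Q̄)α*)`; entries outside the supports do not contribute and
every other entry moves by at most `C²|Q_ij|`. For the distance bound, first-order optimality of
`α*` along the segment towards `ᾱ` gives the quadratic growth
`½ (ᾱ − α*)ᵀQ(ᾱ − α*) ≤ f(ᾱ) − f(α*)`, and the left side is at least `½ σ ‖ᾱ − α*‖²`. -/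

variable {ι : Type*} [Fintype ι]

theorem nonneg_of_forall_mul_add_sq_mul_nonneg {g a : ℝ}
    (h : ∀ t ∈ Ioc (0 : ℝ) 1, 0 ≤ t * g + t ^ 2 * a) : 0 ≤ g := by
  have hlim : Tendsto (fun t => g + t * a) (𝓝[>] 0) (𝓝 g) := by
    have : Continuous fun t : ℝ => g + t * a := by fun_prop
    simpa using (this.tendsto 0).mono_left nhdsWithin_le_nhds
  refine ge_of_tendsto hlim ?_
  filter_upwards [Ioc_mem_nhdsGT one_pos] with t ht
  have := h t ht
  nlinarith [ht.1]

noncomputable def svmDual (Q : Matrix ι ι ℝ) (α : ι → ℝ) : ℝ :=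
  (1 / 2) * (α ⬝ᵥ Q *ᵥ α) - ∑ i, α i

theorem svmDual_add_smul (Q : Matrix ι ι ℝ) (x d : ι → ℝ) (t : ℝ) :
    svmDual Q (x + t • d) = svmDual Q x
      + t * ((1 / 2) * (x ⬝ᵥ Q *ᵥ d + d ⬝ᵥ Q *ᵥ x) - ∑ i, d i)
      + t ^ 2 * ((1 / 2) * (d ⬝ᵥ Q *ᵥ d)) := by
  simp only [svmDual, mulVec_add, mulVec_smul, dotProduct_add, add_dotProduct, smul_dotProduct,
    dotProduct_smul, smul_eq_mul, Pi.add_apply, Pi.smul_apply, Finset.sum_add_distrib,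
    ← Finset.mul_sum]
  ring

theorem svmDual_eq_add (Q Q' : Matrix ι ι ℝ) (α : ι → ℝ) :
    svmDual Q α = svmDual Q' α + (1 / 2) * (α ⬝ᵥ (Q - Q') *ᵥ α) := by
  simp only [svmDual, sub_mulVec, dotProduct_sub]
  ring

theorem IsMinOn.half_quadForm_le_svmDual_sub {Q : Matrix ι ι ℝ} {s : Set (ι → ℝ)} {x y : ι → ℝ}
    (hs : StarConvex ℝ x s) (hx : IsMinOn (svmDual Q) s x) (hy : y ∈ s) :
    (1 / 2) * ((x - y) ⬝ᵥ Q *ᵥ (x - y)) ≤ svmDual Q y - svmDual Q x := by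
  set d := y - x
  have hdir : ∀ t ∈ Ioc (0 : ℝ) 1,
      0 ≤ t * ((1 / 2) * (x ⬝ᵥ Q *ᵥ d + d ⬝ᵥ Q *ᵥ x) - ∑ i, d i)
        + t ^ 2 * ((1 / 2) * (d ⬝ᵥ Q *ᵥ d)) := by
    intro t ht
    have : svmDual Q x ≤ svmDual Q (x + t • d) := hx (hs.add_smul_sub_mem hy ht.1.le ht.2)
    rw [svmDual_add_smul] at this
    linarith
  have hslope := nonneg_of_forall_mul_add_sq_mul_nonneg hdir
  have hend := svmDual_add_smul Q x d 1
  rw [one_smul, add_sub_cancel, one_mul] at hend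
  have hsymm : (x - y) ⬝ᵥ Q *ᵥ (x - y) = d ⬝ᵥ Q *ᵥ d := by
    rw [← neg_sub y x, neg_dotProduct, mulVec_neg, dotProduct_neg, neg_neg]
  rw [hsymm]
  linarith

theorem svmDual_sub_le_of_isMinOn {Q Q' : Matrix ι ι ℝ} {s : Set (ι → ℝ)} {x y : ι → ℝ}
    (hy : IsMinOn (svmDual Q') s y) (hx : x ∈ s) :
    svmDual Q y - svmDual Q x ≤ (1 / 2) * (y ⬝ᵥ (Q - Q') *ᵥ y - x ⬝ᵥ (Q - Q') *ᵥ x) := by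
  have : svmDual Q' y ≤ svmDual Q' x := hy hx
  rw [svmDual_eq_add Q Q' x, svmDual_eq_add Q Q' y]
  linarith

theorem mul_sub_mul_le_of_mem_Icc {C r a b c d : ℝ} (ha : a ∈ Icc 0 C) (hb : b ∈ Icc 0 C)
    (hc : c ∈ Icc 0 C) (hd : d ∈ Icc 0 C) :
    r * (a * b - c * d) ≤
      if (0 < c ∨ 0 < a) ∧ (0 < d ∨ 0 < b) then C ^ 2 * |r| else 0 := by
  split_ifs with hpos
  · have : |a * b - c * d| ≤ C ^ 2 := by
      rw [abs_le]
      constructor <;> nlinarith [ha.1, ha.2, hb.1, hb.2, hc.1, hc.2, hd.1, hd.2]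
    calc r * (a * b - c * d) ≤ |r| * |a * b - c * d| := by rw [← abs_mul]; exact le_abs_self _
      _ ≤ |r| * C ^ 2 := by gcongr
      _ = C ^ 2 * |r| := mul_comm _ _
  · rcases not_and_or.mp hpos with h | h <;> simp only [not_or, not_lt] at h
    · rw [le_antisymm h.1 hc.1, le_antisymm h.2 ha.1]; simp
    · rw [le_antisymm h.1 hd.1, le_antisymm h.2 hb.1]; simp

theorem dotProduct_mulVec_sub_le {C : ℝ} (R : Matrix ι ι ℝ) {x y : ι → ℝ}
    (hx : ∀ i, x i ∈ Icc 0 C) (hy : ∀ i, y i ∈ Icc 0 C) :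
    y ⬝ᵥ R *ᵥ y - x ⬝ᵥ R *ᵥ x ≤
      C ^ 2 * ∑ i, ∑ j, if (0 < x i ∨ 0 < y i) ∧ (0 < x j ∨ 0 < y j) then |R i j| else 0 := by
  simp only [dotProduct, mulVec, Finset.mul_sum, ← Finset.sum_sub_distrib]
  refine Finset.sum_le_sum fun i _ => Finset.sum_le_sum fun j _ => ?_
  calc y i * (R i j * y j) - x i * (R i j * x j) = R i j * (y i * y j - x i * x j) := by ring
    _ ≤ _ := mul_sub_mul_le_of_mem_Icc (hy i) (hy j) (hx i) (hx j)
    _ = _ := by split_ifs <;> simp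

theorem stmt6_general (n k : ℕ) (Q : Matrix (Fin n) (Fin n) ℝ)
    (C : ℝ) (π : Fin n → Fin k)
    (Qbar : Matrix (Fin n) (Fin n) ℝ)
    (hQbar : ∀ i j, Qbar i j = if π i = π j then Q i j else 0)
    (box : Set (Fin n → ℝ))
    (hbox : box = {α | ∀ i, 0 ≤ α i ∧ α i ≤ C})
    (f fbar : (Fin n → ℝ) → ℝ)
    (hf : ∀ α, f α = (1/2) * (α ⬝ᵥ Q.mulVec α) - ∑ i, α i)
    (hfbar : ∀ α, fbar α = (1/2) * (α ⬝ᵥ Qbar.mulVec α) - ∑ i, α i)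
    (αstar : Fin n → ℝ) (hαstar : αstar ∈ box)
    (hmin : ∀ β ∈ box, f αstar ≤ f β)
    (αbar : Fin n → ℝ) (hαbar : αbar ∈ box)
    (hminbar : ∀ β ∈ box, fbar αbar ≤ fbar β)
    (Dset : ℝ)
    (hDset : Dset = ∑ i, ∑ j,
      (if (0 < αstar i ∨ 0 < αbar i) ∧ (0 < αstar j ∨ 0 < αbar j) ∧ π i ≠ π j
        then |Q i j| else 0)) :
    (0 ≤ f αbar - f αstar ∧ f αbar - f αstar ≤ (1/2) * C^2 * Dset) ∧
    (∀ σ : ℝ, 0 < σ →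
      (∀ x : Fin n → ℝ, σ * (∑ i, (x i)^2) ≤ x ⬝ᵥ Q.mulVec x) →
      ∑ i, (αstar i - αbar i)^2 ≤ C^2 * Dset / σ) := by
  obtain rfl : f = svmDual Q := funext hf
  obtain rfl : fbar = svmDual Qbar := funext hfbar
  have hconv : Convex ℝ box := by
    rw [hbox]
    simpa [Set.pi] using convex_pi (s := univ) fun _ _ => convex_Icc (0 : ℝ) C
  have hoff : Dset = ∑ i, ∑ j, if (0 < αstar i ∨ 0 < αbar i) ∧ (0 < αstar j ∨ 0 < αbar j)
      then |(Q - Qbar) i j| else 0 := by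
    rw [hDset]
    refine Finset.sum_congr rfl fun i _ => Finset.sum_congr rfl fun j _ => ?_
    rw [Matrix.sub_apply, hQbar]
    split_ifs <;> simp_all
  have hgap : svmDual Q αbar - svmDual Q αstar ≤ (1 / 2) * C ^ 2 * Dset := by
    subst hbox
    calc _ ≤ (1 / 2) * (αbar ⬝ᵥ (Q - Qbar) *ᵥ αbar - αstar ⬝ᵥ (Q - Qbar) *ᵥ αstar) :=
          svmDual_sub_le_of_isMinOn (isMinOn_iff.2 hminbar) hαstar
      _ ≤ (1 / 2) * (C ^ 2 * Dset) := by
          rw [hoff]; gcongr; exact dotProduct_mulVec_sub_le _ hαstar hαbar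
      _ = _ := by ring
  refine ⟨⟨sub_nonneg.2 (hmin αbar hαbar), hgap⟩, fun σ hσ hPD => ?_⟩
  have hgrowth := (isMinOn_iff.2 hmin).half_quadForm_le_svmDual_sub (hconv.starConvex hαstar) hαbar
  have hcoer := hPD (αstar - αbar)
  simp only [Pi.sub_apply] at hcoer
  rw [le_div_iff₀ hσ]
  linarith

/-- the refined bound restricted to the union of support-vector sets:
0 ≤ f(ᾱ) − f(α*) ≤ (1/2)C²·D_{S*∪S̄}(π), and under positive definiteness
‖α* − ᾱ‖² ≤ C²·D_{S*∪S̄}(π)/σ. -/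
theorem stmt6 (n k : ℕ) (Q : Matrix (Fin n) (Fin n) ℝ) (hQ : Q.IsSymm)
    (C : ℝ) (hC : 0 < C) (π : Fin n → Fin k)
    (Qbar : Matrix (Fin n) (Fin n) ℝ)
    (hQbar : ∀ i j, Qbar i j = if π i = π j then Q i j else 0)
    (box : Set (Fin n → ℝ))
    (hbox : box = {α | ∀ i, 0 ≤ α i ∧ α i ≤ C})
    (f fbar : (Fin n → ℝ) → ℝ)
    (hf : ∀ α, f α = (1/2) * (α ⬝ᵥ Q.mulVec α) - ∑ i, α i)
    (hfbar : ∀ α, fbar α = (1/2) * (α ⬝ᵥ Qbar.mulVec α) - ∑ i, α i)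
    (αstar : Fin n → ℝ) (hαstar : αstar ∈ box)
    (hmin : ∀ β ∈ box, f αstar ≤ f β)
    (αbar : Fin n → ℝ) (hαbar : αbar ∈ box)
    (hminbar : ∀ β ∈ box, fbar αbar ≤ fbar β)
    (Dset : ℝ)
    (hDset : Dset = ∑ i, ∑ j,
      (if (0 < αstar i ∨ 0 < αbar i) ∧ (0 < αstar j ∨ 0 < αbar j) ∧ π i ≠ π j
        then |Q i j| else 0)) :
    (0 ≤ f αbar - f αstar ∧ f αbar - f αstar ≤ (1/2) * C^2 * Dset) ∧
    (∀ σ : ℝ, 0 < σ →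
      (∀ x : Fin n → ℝ, σ * (∑ i, (x i)^2) ≤ x ⬝ᵥ Q.mulVec x) →
      ∑ i, (αstar i - αbar i)^2 ≤ C^2 * Dset / σ) :=
  stmt6_general n k Q C π Qbar hQbar box hbox f fbar hf hfbar αstar hαstar hmin αbar hαbar hminbar
    Dset hDset
end
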